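/- arXiv:1004.4721 — 6 statements merged into one kernel-verified Lean document; each statement's English description precedes it below -/
import Mathlib

section
/- Let R be a skew-invertible R-matrix on V⊗V with V = ℂ^N satisfying the Hecke condition with parameter q, let B := Tr₍₁₎(Ψ) with entries B_p^j in the standard basis, and let η ∈ ℂ∖{0}. Define endomorphisms A_i^j ∈ End(V), 1 ≤ i,j ≤ N, by A_i^j(e_p) = η·(δ_i^j e_p − (q−q⁻¹) B_p^j e_i). Then the N×N matrix Λ with entries Λ_i^j = A_i^j in the (noncommutative) algebra End(V) satisfies the reflection equation R₁Λ₁R₁Λ₁ = Λ₁R₁Λ₁R₁ in Mat_{N²}(End(V)); i.e., the assignment L_i^j ↦ A_i^j defines a representation of the reflection equation algebra on V. -/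
open Matrix BigOperators

/-- `X₁ = X ⊗ id` acting on the factors 1,2 of `(ℂ^N)^{⊗3}`. -/
noncomputable def up12 {N : ℕ} (X : Matrix (Fin N × Fin N) (Fin N × Fin N) ℂ) :
    Matrix (Fin N × Fin N × Fin N) (Fin N × Fin N × Fin N) ℂ :=
  Matrix.of fun p q => X (p.1, p.2.1) (q.1, q.2.1) * (if p.2.2 = q.2.2 then 1 else 0)

/-- `X₂ = id ⊗ X` acting on the factors 2,3 of `(ℂ^N)^{⊗3}`. -/
noncomputable def up23 {N : ℕ} (X : Matrix (Fin N × Fin N) (Fin N × Fin N) ℂ) :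
    Matrix (Fin N × Fin N × Fin N) (Fin N × Fin N × Fin N) ℂ :=
  Matrix.of fun p q => (if p.1 = q.1 then 1 else 0) * X (p.2.1, p.2.2) (q.2.1, q.2.2)

/-- The partial trace over the middle factor of `V^{⊗3}`. -/
noncomputable def ptrMid {N : ℕ}
    (Y : Matrix (Fin N × Fin N × Fin N) (Fin N × Fin N × Fin N) ℂ) :
    Matrix (Fin N × Fin N) (Fin N × Fin N) ℂ :=
  Matrix.of fun a d => ∑ b : Fin N, Y (a.1, b, a.2) (d.1, b, d.2)

/-- The flip `P₁₃` on factors 1 and 3. -/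
noncomputable def flip13 (N : ℕ) : Matrix (Fin N × Fin N) (Fin N × Fin N) ℂ :=
  Matrix.of fun p q => if p.1 = q.2 ∧ p.2 = q.1 then 1 else 0

/-- `B = Tr₍₁₎(Ψ)`, with entries `B_p^j = Σ_a Ψ_{ap}^{aj}`. -/
noncomputable def Bmat {N : ℕ} (Ψ : Matrix (Fin N × Fin N) (Fin N × Fin N) ℂ) :
    Matrix (Fin N) (Fin N) ℂ :=
  Matrix.of fun p j => ∑ a : Fin N, Ψ (a, p) (a, j)

/-- `X₁ = X ⊗ I_N` for a matrix with entries in a (noncommutative) algebra. -/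
def lift1 {N : ℕ} {A : Type} [Ring A] (X : Matrix (Fin N) (Fin N) A) :
    Matrix (Fin N × Fin N) (Fin N × Fin N) A :=
  Matrix.of fun p q => X p.1 q.1 * (if p.2 = q.2 then 1 else 0)

/-- The endomorphism `A_i^j ∈ End(V)` defined by
`A_i^j(e_p) = η (δ_i^j e_p − (q − q⁻¹) B_p^j e_i)`, encoded as the matrix whose
`(r,p)` entry is the coefficient of `e_r` in `A_i^j(e_p)`. -/
noncomputable def Aop {N : ℕ} (Ψ : Matrix (Fin N × Fin N) (Fin N × Fin N) ℂ)
    (q η : ℂ) (i j : Fin N) : Matrix (Fin N) (Fin N) ℂ :=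
  Matrix.of fun r p =>
    η * ((if i = j then 1 else 0) * (if r = p then 1 else 0)
      - (q - q⁻¹) * Bmat Ψ p j * (if r = i then 1 else 0))

/-!
Write `Λ = η (1 - (q - q⁻¹) K)`, where `K_i^j = e_i ⊗ B^j` is the rank-one operator
`e_s ↦ B_s^j e_i`, so that `K_i^a K_c^j = B_c^a K_i^j`. Skew-invertibility gives
`Σ_{a,c} R_{ak}^{cl} B_c^a = δ_k^l`, i.e. `K₁ R₁ K₁ = K₁`. Together with the Hecke relation
`R² = 1 + (q - q⁻¹) R` this makes the reflection equation for `Λ` a formal identity in the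
ring `Mat_{N²}(End V)`.
-/

section HeckeAlgebra

variable {𝕜 A : Type*} [Field 𝕜] [Ring A] [Algebra 𝕜 A]

theorem mul_self_eq_one_add_smul_of_hecke {X : A} {q : 𝕜} (hq : q ≠ 0)
    (h : (X - q • 1) * (X + q⁻¹ • 1) = 0) : X * X = 1 + (q - q⁻¹) • X := by
  simp only [sub_mul, mul_add, smul_mul_assoc, mul_smul_comm, one_mul, mul_one, smul_sub,
    smul_smul, inv_mul_cancel₀ hq, one_smul] at h
  rw [sub_smul, ← sub_eq_zero, ← h]
  abel

theorem mul_one_sub_mul_one_sub_comm {X J : A} {l : 𝕜} (hX : X * X = 1 + l • X)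
    (hJ : J * X * J = l • J) :
    X * (1 - J) * X * (1 - J) = (1 - J) * X * (1 - J) * X := by
  have hXXJ : X * X * J = J + l • (X * J) := by rw [hX, add_mul, one_mul, smul_mul_assoc]
  have hJXX : J * (X * X) = J + l • (J * X) := by rw [hX, mul_add, mul_one, mul_smul_comm]
  have hXJXJ : X * (J * X * J) = l • (X * J) := by rw [hJ, mul_smul_comm]
  have hJXJX : J * X * J * X = l • (J * X) := by rw [hJ, smul_mul_assoc]
  calc X * (1 - J) * X * (1 - J)
      = X * X - X * J * X - X * X * J + X * (J * X * J) := by noncomm_ring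
    _ = X * X - X * J * X - J := by rw [hXXJ, hXJXJ]; abel
    _ = X * X - X * J * X - J * (X * X) + J * X * J * X := by rw [hJXX, hJXJX]; abel
    _ = (1 - J) * X * (1 - J) * X := by noncomm_ring

theorem reflection_eq_of_hecke {X K : A} {l : 𝕜} (η : 𝕜) (hX : X * X = 1 + l • X)
    (hK : K * X * K = K) :
    X * (η • (1 - l • K)) * X * (η • (1 - l • K))
      = (η • (1 - l • K)) * X * (η • (1 - l • K)) * X := by
  have hJ : (l • K) * X * (l • K) = l • (l • K) := by
    rw [smul_mul_assoc, smul_mul_assoc, mul_smul_comm, hK]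
  simp only [mul_smul_comm, smul_mul_assoc, mul_one_sub_mul_one_sub_comm hX hJ]

end HeckeAlgebra

section SkewInvertible

variable {N : ℕ}

theorem sum_mul_Bmat_eq_ite {R Ψ : Matrix (Fin N × Fin N) (Fin N × Fin N) ℂ}
    (hskew : ptrMid (up12 Ψ * up23 R) = flip13 N) (k l : Fin N) :
    ∑ a, ∑ c, R (a, k) (c, l) * Bmat Ψ c a = if k = l then 1 else 0 := by
  have hdiag (x : Fin N) : ∑ a, ∑ c, R (a, k) (c, l) * Ψ (x, c) (x, a)
      = if x = l ∧ k = x then 1 else 0 := by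
    have h := congrFun (congrFun hskew (x, k)) (x, l)
    simp only [ptrMid, up12, mul_ite, mul_one, mul_zero, up23, Prod.mk.eta, ite_mul, one_mul,
      zero_mul, Matrix.mul_apply, of_apply, Fintype.sum_prod_type, Finset.sum_ite_irrel,
      Finset.sum_ite_eq, Finset.mem_univ, ↓reduceIte, Finset.sum_const_zero, Finset.sum_ite_eq',
      flip13] at h
    rw [Finset.sum_comm]
    simpa only [mul_comm] using h
  calc ∑ a, ∑ c, R (a, k) (c, l) * Bmat Ψ c a
      = ∑ a, ∑ x, ∑ c, R (a, k) (c, l) * Ψ (x, c) (x, a) := by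
        simp only [Bmat, Matrix.of_apply, Finset.mul_sum]
        exact Finset.sum_congr rfl fun _ _ => Finset.sum_comm
    _ = ∑ x, ∑ a, ∑ c, R (a, k) (c, l) * Ψ (x, c) (x, a) := Finset.sum_comm
    _ = if k = l then 1 else 0 := by
        simp [hdiag, ite_and, eq_comm]

noncomputable def rankOneOp (Ψ : Matrix (Fin N × Fin N) (Fin N × Fin N) ℂ) :
    Matrix (Fin N) (Fin N) (Matrix (Fin N) (Fin N) ℂ) :=
  Matrix.of fun i j => Matrix.of fun r s => if r = i then Bmat Ψ s j else 0

theorem rankOneOp_mul_rankOneOp (Ψ : Matrix (Fin N × Fin N) (Fin N × Fin N) ℂ)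
    (i a c j : Fin N) : rankOneOp Ψ i a * rankOneOp Ψ c j = Bmat Ψ c a • rankOneOp Ψ i j := by
  ext r s
  simp [rankOneOp, Matrix.mul_apply]

theorem lift1_Aop (Ψ : Matrix (Fin N × Fin N) (Fin N × Fin N) ℂ) (q η : ℂ) :
    lift1 (Matrix.of (Aop Ψ q η)) = η • (1 - (q - q⁻¹) • lift1 (rankOneOp Ψ)) := by
  ext ⟨i, k⟩ ⟨j, l⟩ r s
  by_cases hkl : k = l <;> by_cases hij : i = j <;>
    simp [lift1, Aop, rankOneOp, Matrix.one_apply, hkl, hij]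

theorem lift1_mul_map_mul_lift1_apply {𝕜 A : Type} [CommRing 𝕜] [Ring A] [Algebra 𝕜 A]
    (R : Matrix (Fin N × Fin N) (Fin N × Fin N) 𝕜) (X Y : Matrix (Fin N) (Fin N) A)
    (i k j l : Fin N) :
    (lift1 X * R.map (algebraMap 𝕜 A) * lift1 Y) (i, k) (j, l)
      = ∑ a, ∑ c, R (a, k) (c, l) • (X i a * Y c j) := by
  simp only [lift1, mul_ite, mul_one, mul_zero, Matrix.mul_apply, of_apply, map_apply, ite_mul,
    zero_mul, Fintype.sum_prod_type, Finset.sum_ite_eq, Finset.mem_univ, ↓reduceIte,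
    Finset.sum_mul, Finset.sum_ite_eq', Algebra.smul_def]
  rw [Finset.sum_comm]
  simp only [← Algebra.commutes, mul_assoc]

theorem lift1_rankOneOp_mul_map_mul_lift1 {R Ψ : Matrix (Fin N × Fin N) (Fin N × Fin N) ℂ}
    (hskew : ptrMid (up12 Ψ * up23 R) = flip13 N) :
    lift1 (rankOneOp Ψ) * R.map (algebraMap ℂ _) * lift1 (rankOneOp Ψ) = lift1 (rankOneOp Ψ) := by
  ext ⟨i, k⟩ ⟨j, l⟩ : 1
  simp only [lift1_mul_map_mul_lift1_apply, rankOneOp_mul_rankOneOp, smul_smul,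
    ← Finset.sum_smul, sum_mul_Bmat_eq_ite hskew]
  simp [lift1]

end SkewInvertible

theorem reflection_rep_on_V_general (N : ℕ)
    (R Ψ : Matrix (Fin N × Fin N) (Fin N × Fin N) ℂ) (q η : ℂ)
    (hq : q ≠ 0)
    (hHecke : (R - q • (1 : Matrix (Fin N × Fin N) (Fin N × Fin N) ℂ))
        * (R + q⁻¹ • (1 : Matrix (Fin N × Fin N) (Fin N × Fin N) ℂ)) = 0)
    (hskew : ptrMid (up12 R * up23 Ψ) = flip13 N ∧ ptrMid (up12 Ψ * up23 R) = flip13 N) :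
    R.map (algebraMap ℂ (Matrix (Fin N) (Fin N) ℂ)) * lift1 (Matrix.of (Aop Ψ q η))
        * R.map (algebraMap ℂ (Matrix (Fin N) (Fin N) ℂ)) * lift1 (Matrix.of (Aop Ψ q η))
      = lift1 (Matrix.of (Aop Ψ q η)) * R.map (algebraMap ℂ (Matrix (Fin N) (Fin N) ℂ))
        * lift1 (Matrix.of (Aop Ψ q η)) * R.map (algebraMap ℂ (Matrix (Fin N) (Fin N) ℂ)) := by
  have hR := congrArg (Algebra.ofId ℂ (Matrix (Fin N) (Fin N) ℂ)).mapMatrix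
    (mul_self_eq_one_add_smul_of_hecke hq hHecke)
  simp only [map_mul, map_add, map_one, map_smul, AlgHom.mapMatrix_apply] at hR
  rw [lift1_Aop]
  exact reflection_eq_of_hecke η hR (lift1_rankOneOp_mul_map_mul_lift1 hskew.2)

/-- The matrix `Λ` with entries `Λ_i^j = A_i^j` in the noncommutative algebra
`End(V) = Mat_N(ℂ)` satisfies the reflection equation `R₁Λ₁R₁Λ₁ = Λ₁R₁Λ₁R₁`,
i.e. the assignment `L_i^j ↦ A_i^j` is a representation of the reflection
equation algebra on `V`. -/
theorem reflection_rep_on_V (N : ℕ) (hN : 1 ≤ N)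
    (R Rinv Ψ : Matrix (Fin N × Fin N) (Fin N × Fin N) ℂ) (q η : ℂ)
    (hq : q ≠ 0) (hη : η ≠ 0)
    (hYB : up12 R * up23 R * up12 R = up23 R * up12 R * up23 R)
    (hRinv : R * Rinv = 1 ∧ Rinv * R = 1)
    (hHecke : (R - q • (1 : Matrix (Fin N × Fin N) (Fin N × Fin N) ℂ))
        * (R + q⁻¹ • (1 : Matrix (Fin N × Fin N) (Fin N × Fin N) ℂ)) = 0)
    (hskew : ptrMid (up12 R * up23 Ψ) = flip13 N ∧ ptrMid (up12 Ψ * up23 R) = flip13 N) :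
    R.map (algebraMap ℂ (Matrix (Fin N) (Fin N) ℂ)) * lift1 (Matrix.of (Aop Ψ q η))
        * R.map (algebraMap ℂ (Matrix (Fin N) (Fin N) ℂ)) * lift1 (Matrix.of (Aop Ψ q η))
      = lift1 (Matrix.of (Aop Ψ q η)) * R.map (algebraMap ℂ (Matrix (Fin N) (Fin N) ℂ))
        * lift1 (Matrix.of (Aop Ψ q η)) * R.map (algebraMap ℂ (Matrix (Fin N) (Fin N) ℂ)) :=
  reflection_rep_on_V_general N R Ψ q η hq hHecke hskew
end

section
/- Let R be a skew-invertible R-matrix on V⊗V with V = ℂ^N satisfying the Hecke condition with parameter q, and let η̃ ∈ ℂ∖{0}. Let (R²)_{si}^{kj} denote the matrix entries of R∘R, i.e., (R∘R)(e_s⊗e_i) = Σ_{k,j} (R²)_{si}^{kj} e_k⊗e_j. Define endomorphisms D_i^j ∈ End(V), 1 ≤ i,j ≤ N, by D_i^j(e_k) = η̃·Σ_{s=1}^N (R²)_{si}^{kj} e_s. Then the N×N matrix D with entries D_i^j satisfies the reflection equation R₁D₁R₁D₁ = D₁R₁D₁R₁ in Mat_{N²}(End(V)); i.e., the assignment L_i^j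 ↦ D_i^j defines a representation of the reflection equation algebra on the dual space V*. -/
open Matrix BigOperators

/-- The endomorphism `D_i^j ∈ End(V)` given by
`D_i^j(e_k) = η̃ Σ_s (R²)_{si}^{kj} e_s`, encoded as the matrix whose `(s,k)`
entry is the coefficient of `e_s` in `D_i^j(e_k)`.  Here
`(R∘R)(e_s⊗e_i) = Σ_{k,j} (R²)_{si}^{kj} e_k⊗e_j`, i.e.
`(R²)_{si}^{kj} = (R*R) (s,i) (k,j)` with lower (input) indices first. -/
noncomputable def Dop {N : ℕ} (R : Matrix (Fin N × Fin N) (Fin N × Fin N) ℂ)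
    (ηt : ℂ) (i j : Fin N) : Matrix (Fin N) (Fin N) ℂ :=
  Matrix.of fun s k => ηt * (R * R) (s, i) (k, j)

/-! Identify `Mat_{N²}(End V)` with `End(V^{⊗3})`, putting the `End V` factor first. Then `R₁`
becomes `R₂₃` and `D₁` becomes `η̃ R₁₂²`, so the reflection equation reads
`R₂₃ R₁₂² R₂₃ R₁₂² = R₁₂² R₂₃ R₁₂² R₂₃`. Expanding `R₁₂²` and `R₂₃²` with the quadratic relation
`x² = (q - q⁻¹) x + 1` given by the Hecke condition, both sides reduce, via the braid relation,
to the same combination of `R₁₂ R₂₃ R₁₂`, `R₁₂ R₂₃`, `R₂₃ R₁₂`, `R₁₂`, `R₂₃` and `1`. -/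

section HeckeRelation

variable {K A : Type*} [Field K] [Ring A] [Algebra K A]

theorem mul_self_eq_of_hecke {q : K} (hq : q ≠ 0) {r : A}
    (h : (r - q • 1) * (r + q⁻¹ • 1) = 0) : r * r = (q - q⁻¹) • r + 1 := by
  have expand : (r - q • 1) * (r + q⁻¹ • 1) = r * r - (q - q⁻¹) • r - (q * q⁻¹) • (1 : A) := by
    simp only [mul_add, sub_mul, smul_mul_assoc, mul_smul_comm, one_mul, mul_one]
    module
  rw [expand, mul_inv_cancel₀ hq, one_smul, sub_sub, sub_eq_zero] at h
  exact h

end HeckeRelation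

section QuadraticRelation

variable {K A : Type*} [CommRing K] [Ring A] [Algebra K A]

theorem AlgHom.map_mul_self_eq_smul_add_one {B : Type*} [Ring B] [Algebra K B] (f : A →ₐ[K] B)
    {γ : K} {r : A} (h : r * r = γ • r + 1) : f r * f r = γ • f r + 1 := by
  rw [← map_mul, h, map_add, map_smul, map_one]

theorem reflection_equation_of_hecke_braid {γ : K} {a b : A}
    (ha : a * a = γ • a + 1) (hb : b * b = γ • b + 1) (hab : a * b * a = b * a * b) :
    b * (a * a) * b * (a * a) = (a * a) * b * (a * a) * b := by
  have hbaba : b * a * b * a = γ • (a * b * a) + a * b := by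
    rw [← hab, mul_assoc (a * b), ha, mul_add, mul_smul_comm, mul_one]
  have habab : a * b * a * b = γ • (a * b * a) + b * a := by
    rw [hab, mul_assoc (b * a), hb, mul_add, mul_smul_comm, mul_one]
  have habb : a * b * b = γ • (a * b) + a := by
    rw [mul_assoc, hb, mul_add, mul_smul_comm, mul_one]
  have hbba : b * b * a = γ • (b * a) + a := by
    rw [hb, add_mul, smul_mul_assoc, one_mul]
  rw [ha]
  calc b * (γ • a + 1) * b * (γ • a + 1)
      = γ • γ • (b * a * b * a) + γ • (b * a * b) + γ • (b * b * a) + b * b := by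
        simp only [mul_add, add_mul, smul_mul_assoc, mul_smul_comm, mul_one, mul_assoc]
        module
    _ = γ • γ • (a * b * a * b) + γ • (a * b * b) + γ • (b * a * b) + b * b := by
        rw [hbaba, habab, habb, hbba, hab]
        module
    _ = (γ • a + 1) * b * (γ • a + 1) * b := by
        simp only [mul_add, add_mul, smul_mul_assoc, mul_smul_comm, one_mul, mul_one, mul_assoc]
        module

end QuadraticRelation

section TripleTensor

noncomputable def up12AlgHom (N : ℕ) :
    Matrix (Fin N × Fin N) (Fin N × Fin N) ℂ →ₐ[ℂ]
      Matrix (Fin N × Fin N × Fin N) (Fin N × Fin N × Fin N) ℂ where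
  toFun := up12
  map_one' := by
    ext ⟨s, a, b⟩ ⟨k, c, d⟩
    simp only [up12, of_apply, one_apply, Prod.mk.injEq]
    split_ifs <;> simp_all
  map_mul' X Y := by
    ext ⟨s, a, b⟩ ⟨k, c, d⟩
    simp [up12, mul_apply, Fintype.sum_prod_type]
  map_zero' := by
    ext
    simp [up12]
  map_add' X Y := by
    ext
    simp only [up12, of_apply, Matrix.add_apply, add_mul]
  commutes' z := by
    ext ⟨s, a, b⟩ ⟨k, c, d⟩
    simp only [up12, of_apply, algebraMap_matrix_apply, Prod.mk.injEq]
    split_ifs <;> simp_all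

noncomputable def up23AlgHom (N : ℕ) :
    Matrix (Fin N × Fin N) (Fin N × Fin N) ℂ →ₐ[ℂ]
      Matrix (Fin N × Fin N × Fin N) (Fin N × Fin N × Fin N) ℂ where
  toFun := up23
  map_one' := by
    ext ⟨s, a, b⟩ ⟨k, c, d⟩
    simp only [up23, of_apply, one_apply, Prod.mk.injEq]
    split_ifs <;> simp_all
  map_mul' X Y := by
    ext ⟨s, a, b⟩ ⟨k, c, d⟩
    simp [up23, mul_apply, Fintype.sum_prod_type]
  map_zero' := by
    ext
    simp [up23]
  map_add' X Y := by
    ext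
    simp only [up23, of_apply, Matrix.add_apply, mul_add]
  commutes' z := by
    ext ⟨s, a, b⟩ ⟨k, c, d⟩
    simp only [up23, of_apply, algebraMap_matrix_apply, Prod.mk.injEq]
    split_ifs <;> simp_all

def blockRingEquiv (m n α : Type*) [Fintype m] [Fintype n] [AddCommMonoid α] [Mul α] :
    Matrix n n (Matrix m m α) ≃+* Matrix (m × n) (m × n) α :=
  (compRingEquiv n m α).trans (reindexRingEquiv α (Equiv.prodComm n m))

theorem blockRingEquiv_map_algebraMap {N : ℕ} (R : Matrix (Fin N × Fin N) (Fin N × Fin N) ℂ) :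
    blockRingEquiv (Fin N) (Fin N × Fin N) ℂ (R.map (algebraMap ℂ (Matrix (Fin N) (Fin N) ℂ))) =
      up23 R := by
  ext ⟨s, a, b⟩ ⟨k, c, d⟩
  simp [blockRingEquiv, up23, algebraMap_matrix_apply, mul_comm]

theorem blockRingEquiv_lift1_Dop {N : ℕ} (R : Matrix (Fin N × Fin N) (Fin N × Fin N) ℂ)
    (ηt : ℂ) :
    blockRingEquiv (Fin N) (Fin N × Fin N) ℂ (lift1 (Matrix.of (Dop R ηt))) =
      ηt • up12 (R * R) := by
  ext ⟨s, a, b⟩ ⟨k, c, d⟩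
  simp [blockRingEquiv, up12, lift1]
  split_ifs <;> rfl

end TripleTensor

theorem reflection_rep_on_dual_general (N : ℕ)
    (R : Matrix (Fin N × Fin N) (Fin N × Fin N) ℂ) (q ηt : ℂ)
    (hq : q ≠ 0)
    (hYB : up12 R * up23 R * up12 R = up23 R * up12 R * up23 R)
    (hHecke : (R - q • (1 : Matrix (Fin N × Fin N) (Fin N × Fin N) ℂ))
        * (R + q⁻¹ • (1 : Matrix (Fin N × Fin N) (Fin N × Fin N) ℂ)) = 0) :
    R.map (algebraMap ℂ (Matrix (Fin N) (Fin N) ℂ)) * lift1 (Matrix.of (Dop R ηt))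
        * R.map (algebraMap ℂ (Matrix (Fin N) (Fin N) ℂ)) * lift1 (Matrix.of (Dop R ηt))
      = lift1 (Matrix.of (Dop R ηt)) * R.map (algebraMap ℂ (Matrix (Fin N) (Fin N) ℂ))
        * lift1 (Matrix.of (Dop R ηt)) * R.map (algebraMap ℂ (Matrix (Fin N) (Fin N) ℂ)) := by
  have hR : R * R = (q - q⁻¹) • R + 1 := mul_self_eq_of_hecke hq hHecke
  have h12 : up12 R * up12 R = (q - q⁻¹) • up12 R + 1 :=
    (up12AlgHom N).map_mul_self_eq_smul_add_one hR
  have h23 : up23 R * up23 R = (q - q⁻¹) • up23 R + 1 :=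
    (up23AlgHom N).map_mul_self_eq_smul_add_one hR
  have hD : up12 (R * R) = up12 R * up12 R := map_mul (up12AlgHom N) R R
  apply (blockRingEquiv (Fin N) (Fin N × Fin N) ℂ).injective
  simp only [map_mul, blockRingEquiv_map_algebraMap, blockRingEquiv_lift1_Dop, hD,
    smul_mul_assoc, mul_smul_comm, reflection_equation_of_hecke_braid h12 h23 hYB]

/-- The matrix `D` with entries `D_i^j` in the noncommutative algebra
`End(V) = Mat_N(ℂ)` satisfies the reflection equation `R₁D₁R₁D₁ = D₁R₁D₁R₁`,
i.e. the assignment `L_i^j ↦ D_i^j` is a representation of the reflection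
equation algebra on the dual space `V*`. -/
theorem reflection_rep_on_dual (N : ℕ) (hN : 1 ≤ N)
    (R Rinv Ψ : Matrix (Fin N × Fin N) (Fin N × Fin N) ℂ) (q ηt : ℂ)
    (hq : q ≠ 0) (hηt : ηt ≠ 0)
    (hYB : up12 R * up23 R * up12 R = up23 R * up12 R * up23 R)
    (hRinv : R * Rinv = 1 ∧ Rinv * R = 1)
    (hHecke : (R - q • (1 : Matrix (Fin N × Fin N) (Fin N × Fin N) ℂ))
        * (R + q⁻¹ • (1 : Matrix (Fin N × Fin N) (Fin N × Fin N) ℂ)) = 0)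
    (hskew : ptrMid (up12 R * up23 Ψ) = flip13 N ∧ ptrMid (up12 Ψ * up23 R) = flip13 N) :
    R.map (algebraMap ℂ (Matrix (Fin N) (Fin N) ℂ)) * lift1 (Matrix.of (Dop R ηt))
        * R.map (algebraMap ℂ (Matrix (Fin N) (Fin N) ℂ)) * lift1 (Matrix.of (Dop R ηt))
      = lift1 (Matrix.of (Dop R ηt)) * R.map (algebraMap ℂ (Matrix (Fin N) (Fin N) ℂ))
        * lift1 (Matrix.of (Dop R ηt)) * R.map (algebraMap ℂ (Matrix (Fin N) (Fin N) ℂ)) :=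
  reflection_rep_on_dual_general N R q ηt hq hYB hHecke
end

section
/- Let R be an R-matrix on V⊗V, V = ℂ^N, satisfying the Hecke condition with parameter q, with q² ≠ 1, let A be an associative unital ℂ-algebra, and let K be an N×N matrix with entries in A. Set L := I_N·1_A − (q−q⁻¹)·K. Then L satisfies the reflection equation R₁L₁R₁L₁ = L₁R₁L₁R₁ in Mat_{N²}(A) if and only if K satisfies the modified reflection equation R₁K₁R₁K₁ − K₁R₁K₁R₁ = R₁K₁ − K₁R₁ in Mat_{N²}(A). -/
/-!
With `c = q - q⁻¹`, the Hecke condition reads `R² = c R + 1`. Substituting `L = 1 - c K` and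
reducing every `R²` by this relation, the reflection defect `R L R L - L R L R` becomes
`c² (R K R K - K R K R - (R K - K R))`; as `q² ≠ 1` forces `c ≠ 0`, the two equations are
equivalent.
-/

open Matrix BigOperators

section HeckeAlgebra

variable {k B : Type*} [Ring B]

lemma mul_self_eq_sub_inv_smul_add_one_of_hecke [Field k] [Algebra k B] {S : B} {q : k}
    (hq : q ≠ 0) (hS : (S - q • 1) * (S + q⁻¹ • 1) = 0) :
    S * S = (q - q⁻¹) • S + 1 := by
  simp only [sub_mul, mul_add, mul_smul_comm, smul_mul_assoc, mul_one, one_mul, smul_sub,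
    smul_smul, inv_mul_cancel₀ hq, one_smul] at hS
  linear_combination (norm := module) hS

lemma reflection_one_sub_smul_sub_eq [CommRing k] [Algebra k B] {S : B} {c : k}
    (hS : S * S = c • S + 1) (M : B) :
    S * (1 - c • M) * S * (1 - c • M) - (1 - c • M) * S * (1 - c • M) * S
      = c ^ 2 • (S * M * S * M - M * S * M * S - (S * M - M * S)) := by
  simp only [mul_sub, sub_mul, mul_one, one_mul, mul_smul_comm, smul_mul_assoc,
    mul_assoc, hS, smul_add, smul_sub, smul_smul, add_mul, mul_add]
  module

lemma reflection_one_sub_smul_iff [Field k] [Algebra k B] {S : B} {c : k} (hc : c ≠ 0)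
    (hS : S * S = c • S + 1) (M : B) :
    S * (1 - c • M) * S * (1 - c • M) = (1 - c • M) * S * (1 - c • M) * S
      ↔ S * M * S * M - M * S * M * S = S * M - M * S := by
  rw [← sub_eq_zero, reflection_one_sub_smul_sub_eq hS, (hc.isUnit.pow 2).smul_eq_zero,
    sub_eq_zero]

end HeckeAlgebra

lemma sub_inv_ne_zero_of_sq_ne_one {K : Type*} [Field K] {q : K} (hq : q ≠ 0)
    (hq2 : q ^ 2 ≠ 1) : q - q⁻¹ ≠ 0 := by
  rw [sub_ne_zero, Ne, ← mul_eq_one_iff_eq_inv₀ hq, ← sq]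
  exact hq2

lemma lift1_one_sub_algebraMap_smul {N : ℕ} {k : Type*} {A : Type} [CommRing k] [Ring A] [Algebra k A]
    (c : k) (K : Matrix (Fin N) (Fin N) A) :
    lift1 (1 - algebraMap k A c • K) = 1 - c • lift1 K := by
  rw [algebraMap_smul]
  ext p r
  by_cases h : p.2 = r.2 <;> simp [lift1, one_apply, Prod.ext_iff, h]

lemma map_algebraMap_hecke {k n : Type*} {A : Type*} [Field k] [Fintype n] [DecidableEq n] [Ring A]
    [Algebra k A] {R : Matrix n n k} {q : k} (hR : (R - q • 1) * (R + q⁻¹ • 1) = 0) :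
    (R.map (algebraMap k A) - q • 1) * (R.map (algebraMap k A) + q⁻¹ • 1) = 0 := by
  have := congrArg (Algebra.ofId k A).mapMatrix hR
  rwa [map_mul, map_sub, map_add, map_smul, map_smul, map_one, map_zero] at this

theorem reflection_iff_modified_reflection_general (N : ℕ)
    (R : Matrix (Fin N × Fin N) (Fin N × Fin N) ℂ) (q : ℂ)
    (hq : q ≠ 0) (hq2 : q ^ 2 ≠ 1)
    (hHecke : (R - q • (1 : Matrix (Fin N × Fin N) (Fin N × Fin N) ℂ))
        * (R + q⁻¹ • (1 : Matrix (Fin N × Fin N) (Fin N × Fin N) ℂ)) = 0)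
    (A : Type) [Ring A] [Algebra ℂ A] (K L : Matrix (Fin N) (Fin N) A)
    (hL : L = (1 : Matrix (Fin N) (Fin N) A) - algebraMap ℂ A (q - q⁻¹) • K) :
    (R.map (algebraMap ℂ A) * lift1 L * R.map (algebraMap ℂ A) * lift1 L
        = lift1 L * R.map (algebraMap ℂ A) * lift1 L * R.map (algebraMap ℂ A))
      ↔ (R.map (algebraMap ℂ A) * lift1 K * R.map (algebraMap ℂ A) * lift1 K
          - lift1 K * R.map (algebraMap ℂ A) * lift1 K * R.map (algebraMap ℂ A)
        = R.map (algebraMap ℂ A) * lift1 K - lift1 K * R.map (algebraMap ℂ A)) := by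
  rw [hL, lift1_one_sub_algebraMap_smul]
  exact reflection_one_sub_smul_iff (sub_inv_ne_zero_of_sq_ne_one hq hq2)
    (mul_self_eq_sub_inv_smul_add_one_of_hecke hq (map_algebraMap_hecke hHecke)) _

/-- For a Hecke-type R-matrix with `q² ≠ 1`, the matrix
`L = I − (q−q⁻¹)K` satisfies the reflection equation
`R₁L₁R₁L₁ = L₁R₁L₁R₁` iff `K` satisfies the modified reflection equation
`R₁K₁R₁K₁ − K₁R₁K₁R₁ = R₁K₁ − K₁R₁`. -/
theorem reflection_iff_modified_reflection (N : ℕ) (hN : 1 ≤ N)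
    (R Rinv : Matrix (Fin N × Fin N) (Fin N × Fin N) ℂ) (q : ℂ)
    (hq : q ≠ 0) (hq2 : q ^ 2 ≠ 1)
    (hYB : up12 R * up23 R * up12 R = up23 R * up12 R * up23 R)
    (hRinv : R * Rinv = 1 ∧ Rinv * R = 1)
    (hHecke : (R - q • (1 : Matrix (Fin N × Fin N) (Fin N × Fin N) ℂ))
        * (R + q⁻¹ • (1 : Matrix (Fin N × Fin N) (Fin N × Fin N) ℂ)) = 0)
    (A : Type) [Ring A] [Algebra ℂ A] (K L : Matrix (Fin N) (Fin N) A)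
    (hL : L = (1 : Matrix (Fin N) (Fin N) A) - algebraMap ℂ A (q - q⁻¹) • K) :
    (R.map (algebraMap ℂ A) * lift1 L * R.map (algebraMap ℂ A) * lift1 L
        = lift1 L * R.map (algebraMap ℂ A) * lift1 L * R.map (algebraMap ℂ A))
      ↔ (R.map (algebraMap ℂ A) * lift1 K * R.map (algebraMap ℂ A) * lift1 K
          - lift1 K * R.map (algebraMap ℂ A) * lift1 K * R.map (algebraMap ℂ A)
        = R.map (algebraMap ℂ A) * lift1 K - lift1 K * R.map (algebraMap ℂ A)) :=
  reflection_iff_modified_reflection_general N R q hq hq2 hHecke A K L hL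
end

section
/- Let R be an R-matrix on V⊗V, V = ℂ^N, let A be an associative unital ℂ-algebra, and let L ∈ Mat_N(A) satisfy the reflection equation R₁L₁R₁L₁ = L₁R₁L₁R₁. For k ≥ 1 define in Mat_{N^k}(A): L_{1̄} := L₁ and L_{i+1‾} := R_i L_{ī} R_i⁻¹; and L_{1̲} := L₁ and L_{i+1̲} := R_i⁻¹ L_{i̲} R_i. Then for every k ≥ 1 the two ordered products coincide: L_{1̄} L_{2̄} ⋯ L_{k̄} = L_{k̲} L_{k−1̲} ⋯ L_{1̲} in Mat_{N^k}(A). -/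
open Matrix BigOperators

/-- A matrix `X ∈ Mat_N(A)` placed in the (0-indexed) tensor factor `p`
of `V^{⊗k}`, acting as the identity elsewhere. -/
def liftV {N : ℕ} {A : Type} [Ring A] (k : ℕ) (X : Matrix (Fin N) (Fin N) A)
    (p : ℕ) : Matrix (Fin k → Fin N) (Fin k → Fin N) A :=
  Matrix.of fun v w =>
    if h : p < k then
      X (v ⟨p, h⟩) (w ⟨p, h⟩) *
        (if ∀ j : Fin k, (j : ℕ) ≠ p → v j = w j then 1 else 0)
    else (if v = w then 1 else 0)

/-- A matrix `X ∈ Mat_{N²}(A)` placed in the (0-indexed) tensor factors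
`p, p+1` of `V^{⊗k}`, acting as the identity elsewhere; this is the
operator `X_{p+1}` in 1-indexed notation. -/
def lift2 {N : ℕ} {A : Type} [Ring A] (k : ℕ)
    (X : Matrix (Fin N × Fin N) (Fin N × Fin N) A) (p : ℕ) :
    Matrix (Fin k → Fin N) (Fin k → Fin N) A :=
  Matrix.of fun v w =>
    if h : p + 1 < k then
      X (v ⟨p, Nat.lt_of_succ_lt h⟩, v ⟨p + 1, h⟩)
          (w ⟨p, Nat.lt_of_succ_lt h⟩, w ⟨p + 1, h⟩) *
        (if ∀ j : Fin k, (j : ℕ) ≠ p → (j : ℕ) ≠ p + 1 → v j = w j then 1 else 0)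
    else (if v = w then 1 else 0)

/-- The "overlined" copies of `L` in `Mat_{N^k}(A)`:
`L_{1̄} = L₁` and `L_{n+2‾} = R_{n+1} L_{n+1‾} R_{n+1}⁻¹` (0-indexed here:
`Lbar k RA RinvA L n` is the copy `L_{n+1‾}`). -/
def Lbar {N : ℕ} {A : Type} [Ring A] (k : ℕ)
    (RA RinvA : Matrix (Fin N × Fin N) (Fin N × Fin N) A)
    (L : Matrix (Fin N) (Fin N) A) :
    ℕ → Matrix (Fin k → Fin N) (Fin k → Fin N) A
  | 0 => liftV k L 0
  | n + 1 => lift2 k RA n * Lbar k RA RinvA L n * lift2 k RinvA n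

/-- The "underlined" copies of `L`:
`L_{1̲} = L₁` and `L_{n+2̲} = R_{n+1}⁻¹ L_{n+1̲} R_{n+1}`. -/
def Lund {N : ℕ} {A : Type} [Ring A] (k : ℕ)
    (RA RinvA : Matrix (Fin N × Fin N) (Fin N × Fin N) A)
    (L : Matrix (Fin N) (Fin N) A) :
    ℕ → Matrix (Fin k → Fin N) (Fin k → Fin N) A
  | 0 => liftV k L 0
  | n + 1 => lift2 k RinvA n * Lund k RA RinvA L n * lift2 k RA n

/-- The ordered product `L_{1̄} L_{2̄} ⋯ L_{n+1‾}`. -/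
def LbarProd {N : ℕ} {A : Type} [Ring A] (k : ℕ)
    (RA RinvA : Matrix (Fin N × Fin N) (Fin N × Fin N) A)
    (L : Matrix (Fin N) (Fin N) A) :
    ℕ → Matrix (Fin k → Fin N) (Fin k → Fin N) A
  | 0 => Lbar k RA RinvA L 0
  | n + 1 => LbarProd k RA RinvA L n * Lbar k RA RinvA L (n + 1)

/-- The ordered product `L_{n+1̲} L_{n̲} ⋯ L_{1̲}`. -/
def LundProd {N : ℕ} {A : Type} [Ring A] (k : ℕ)
    (RA RinvA : Matrix (Fin N × Fin N) (Fin N × Fin N) A)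
    (L : Matrix (Fin N) (Fin N) A) :
    ℕ → Matrix (Fin k → Fin N) (Fin k → Fin N) A
  | 0 => Lund k RA RinvA L 0
  | n + 1 => Lund k RA RinvA L (n + 1) * LundProd k RA RinvA L n

/-!
Only a few relations between the `R_i`, as units of `Mat_{N^k}(A)`, and `L₁` enter: the braid
relation `R_i R_{i+1} R_i = R_{i+1} R_i R_{i+1}`, commutation of `R_i` with `R_j` for `j ≥ i + 2`
and with `L₁` for `i ≥ 2`, and the reflection equation for `(R₁, L₁)`. Conjugating by `R_n` and
using `R_n R_{n+1} R_n⁻¹ = R_{n+1}⁻¹ R_n R_{n+1}` carries the reflection equation for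
`(R_n, L_{n̲})` to the one for `(R_{n+1}, L_{n+1̲})`. As `R_n` commutes with `L_{n-1̲} ⋯ L_{1̲}`,
the equation for `(R_n, L_{n̲})` then turns `L_{n̲} ⋯ L_{1̲} · L_{n+1‾}` into
`L_{n+1̲} · L_{n̲} ⋯ L_{1̲}` by induction on `n`, and the two ordered products agree by induction.

All relations between the matrices come from one device: an operator on some tensor factors,
extended by the identity, is multiplicative, composes along inclusions of factors, and commutes
with operators on disjoint factors.
-/

open Function

section ReflectionEquation

variable {M : Type*} [Monoid M]

/-- With `s i = R_{i+1}`, `conjAlong s L₁ n` is `L_{n+1‾}`; with `s i = R_{i+1}⁻¹` it is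
`L_{n+1̲}`. -/
def conjAlong (s : ℕ → Mˣ) (ℓ : M) : ℕ → M
  | 0 => ℓ
  | n + 1 => s n * conjAlong s ℓ n * ↑(s n)⁻¹

theorem Commute.conjAlong {s : ℕ → Mˣ} {ℓ x : M} {n : ℕ} (hℓ : Commute x ℓ)
    (hs : ∀ i < n, Commute x (s i)) : Commute x (conjAlong s ℓ n) := by
  induction n with
  | zero => exact hℓ
  | succ n ih =>
    have hsn := hs n n.lt_succ_self
    exact (hsn.mul_right (ih fun i hi => hs i (by omega))).mul_right hsn.units_inv_right

theorem conjAlong_inv_succ (s : ℕ → Mˣ) (ℓ : M) (n : ℕ) :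
    conjAlong (fun i => (s i)⁻¹) ℓ (n + 1) =
      ↑(s n)⁻¹ * conjAlong (fun i => (s i)⁻¹) ℓ n * s n := by
  rw [conjAlong, inv_inv]

theorem mul_conj_eq_of_reflection {s : Mˣ} {u : M} (hRE : s * u * s * u = u * s * u * s) :
    u * s * u * ↑s⁻¹ = ↑s⁻¹ * u * s * u := by
  rw [Units.mul_inv_eq_iff_eq_mul]
  simp only [mul_assoc]
  rw [Units.eq_inv_mul_iff_mul_eq]
  simpa only [mul_assoc] using hRE

theorem reflection_conj_of_braid {s r : Mˣ} {u : M} (hbraid : s * r * s = r * s * r)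
    (hru : Commute (r : M) u) (hRE : s * u * s * u = u * s * u * s) :
    r * (↑s⁻¹ * u * s) * r * (↑s⁻¹ * u * s) = ↑s⁻¹ * u * s * r * (↑s⁻¹ * u * s) * r := by
  have hconj : (s * r * ↑s⁻¹ : M) = ↑r⁻¹ * s * r := by
    have : s * r * s⁻¹ = r⁻¹ * s * r := by
      rw [mul_inv_eq_iff_eq_mul, mul_assoc, mul_assoc, ← mul_assoc s, hbraid]; group
    simpa using congrArg Units.val this
  have hbraid' : (s * r * s : M) = r * s * r := by simpa using congrArg Units.val hbraid
  calc r * (↑s⁻¹ * u * s) * r * (↑s⁻¹ * u * s)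
      = ↑s⁻¹ * (s * r * ↑s⁻¹) * u * (s * r * ↑s⁻¹) * u * s := by
        simp only [mul_assoc, Units.inv_mul_cancel_left]
    _ = ↑s⁻¹ * ↑r⁻¹ * (s * u * s * u) * r * s := by
        rw [hconj]; simp only [mul_assoc, Units.mul_inv_cancel_left, hru.eq]
    _ = ↑s⁻¹ * ↑r⁻¹ * (u * s * u) * (s * r * s) := by rw [hRE]; simp only [mul_assoc]
    _ = ↑s⁻¹ * u * (↑r⁻¹ * s * r) * u * s * r := by
        rw [hbraid']
        simp only [mul_assoc, hru.eq]
        rw [← mul_assoc (↑r⁻¹ : M), hru.units_inv_left.eq, mul_assoc]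
    _ = ↑s⁻¹ * u * s * r * (↑s⁻¹ * u * s) * r := by
        rw [← hconj]; simp only [mul_assoc]

variable {s : ℕ → Mˣ} {ℓ : M}

theorem commute_conjAlong_inv {m n : ℕ} (hnm : n < m) (hℓ : ∀ j, 0 < j → Commute (s j : M) ℓ)
    (hfar : ∀ i j, i + 2 ≤ j → Commute (s i) (s j)) :
    Commute (s m : M) (conjAlong (fun i => (s i)⁻¹) ℓ n) :=
  Commute.conjAlong (hℓ m (by omega)) fun i hi =>
    ((hfar i m (by omega)).units_val.symm).units_inv_right

theorem reflection_conjAlong_inv {n : ℕ}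
    (hbraid : ∀ i < n, s i * s (i + 1) * s i = s (i + 1) * s i * s (i + 1))
    (hfar : ∀ i j, i + 2 ≤ j → Commute (s i) (s j)) (hℓ : ∀ j, 0 < j → Commute (s j : M) ℓ)
    (hRE : s 0 * ℓ * s 0 * ℓ = ℓ * s 0 * ℓ * s 0) :
    let u := conjAlong (fun i => (s i)⁻¹) ℓ n
    s n * u * s n * u = u * s n * u * s n := by
  induction n with
  | zero => exact hRE
  | succ n ih =>
    simp only [conjAlong_inv_succ]
    exact reflection_conj_of_braid (hbraid n n.lt_succ_self)
      (commute_conjAlong_inv n.lt_succ_self hℓ hfar) (ih fun i hi => hbraid i (by omega))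

theorem prod_conjAlong_inv_mul_conjAlong {n : ℕ}
    (hbraid : ∀ i < n, s i * s (i + 1) * s i = s (i + 1) * s i * s (i + 1))
    (hfar : ∀ i j, i + 2 ≤ j → Commute (s i) (s j)) (hℓ : ∀ j, 0 < j → Commute (s j : M) ℓ)
    (hRE : s 0 * ℓ * s 0 * ℓ = ℓ * s 0 * ℓ * s 0) :
    let U := conjAlong (fun i => (s i)⁻¹) ℓ
    ((List.range (n + 1)).reverse.map U).prod * conjAlong s ℓ (n + 1)
      = U (n + 1) * ((List.range (n + 1)).reverse.map U).prod := by
  intro U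
  induction n with
  | zero =>
    simpa [U, conjAlong, mul_assoc] using mul_conj_eq_of_reflection hRE
  | succ n ih =>
    set P := ((List.range (n + 1)).reverse.map U).prod
    have hP : Commute (s (n + 1) : M) P :=
      Commute.list_prod_right _ _ fun x hx => by
        obtain ⟨j, hj, rfl⟩ := List.mem_map.1 hx
        exact commute_conjAlong_inv (by simpa using hj) hℓ hfar
    have hP' : Commute (↑(s (n + 1))⁻¹ : M) P := hP.units_inv_left
    have hRE' := reflection_conjAlong_inv hbraid hfar hℓ hRE
    rw [List.range_succ, List.reverse_append, List.reverse_singleton, List.singleton_append,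
      List.map_cons, List.prod_cons, conjAlong,
      show U (n + 1 + 1) = _ from conjAlong_inv_succ s ℓ _]
    calc U (n + 1) * P * (s (n + 1) * conjAlong s ℓ (n + 1) * ↑(s (n + 1))⁻¹)
        = U (n + 1) * s (n + 1) * (P * conjAlong s ℓ (n + 1)) * ↑(s (n + 1))⁻¹ := by
          simp only [mul_assoc]; rw [← mul_assoc P, ← hP.eq, mul_assoc]
      _ = U (n + 1) * s (n + 1) * U (n + 1) * ↑(s (n + 1))⁻¹ * P := by
          rw [ih fun i hi => hbraid i (by omega)]; simp only [mul_assoc, hP'.eq]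
      _ = _ := by rw [mul_conj_eq_of_reflection hRE']; simp only [mul_assoc]; rfl

theorem prod_conjAlong_eq_prod_conjAlong_inv {n : ℕ}
    (hbraid : ∀ i, i + 1 < n → s i * s (i + 1) * s i = s (i + 1) * s i * s (i + 1))
    (hfar : ∀ i j, i + 2 ≤ j → Commute (s i) (s j)) (hℓ : ∀ j, 0 < j → Commute (s j : M) ℓ)
    (hRE : s 0 * ℓ * s 0 * ℓ = ℓ * s 0 * ℓ * s 0) :
    ((List.range (n + 1)).map (conjAlong s ℓ)).prod
      = ((List.range (n + 1)).reverse.map (conjAlong (fun i => (s i)⁻¹) ℓ)).prod := by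
  induction n with
  | zero => simp [conjAlong]
  | succ n ih =>
    rw [List.range_succ, List.map_append, List.prod_append, ih fun i hi => hbraid i (by omega),
      List.reverse_append, List.map_append, List.prod_append]
    simpa using prod_conjAlong_inv_mul_conjAlong (fun i hi => hbraid i (by omega)) hfar hℓ hRE

end ReflectionEquation

namespace Matrix

variable {ι κ n A : Type*} [Fintype ι] [DecidableEq ι] [Fintype κ] [DecidableEq n]

/-- `X` acting on the tensor factors `e i` of `n^{⊗ι}`, and as the identity on the others. -/
def embedFactors [Zero A] (e : κ → ι) (X : Matrix (κ → n) (κ → n) A) :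
    Matrix (ι → n) (ι → n) A :=
  of fun v w => if ∀ j, (∀ i, e i ≠ j) → v j = w j then X (v ∘ e) (w ∘ e) else 0

@[simp]
theorem embedFactors_apply [Zero A] (e : κ → ι) (X : Matrix (κ → n) (κ → n) A) (v w : ι → n) :
    embedFactors e X v w = if ∀ j, (∀ i, e i ≠ j) → v j = w j then X (v ∘ e) (w ∘ e) else 0 :=
  rfl

theorem exists_embedFactors_eq_submatrix_blockDiagonal [Zero A] {e : κ → ι} (he : Injective e) :
    ∃ σ : (ι → n) ≃ (κ → n) × ({j // j ∉ Set.range e} → n), ∀ X : Matrix (κ → n) (κ → n) A,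
      embedFactors e X = (blockDiagonal fun _ => X).submatrix σ σ := by
  classical
  refine ⟨(Equiv.piEquivPiSubtypeProd (· ∈ Set.range e) fun _ => n).trans
    (((Equiv.ofInjective e he).arrowCongr (Equiv.refl n)).symm.prodCongr (Equiv.refl _)),
    fun X => ?_⟩
  ext v w
  simp only [embedFactors_apply, Equiv.coe_trans, Equiv.prodCongr_apply, Equiv.coe_refl,
    submatrix_apply, Function.comp_apply, Equiv.piEquivPiSubtypeProd_apply, Prod.map_apply, id_eq,
    blockDiagonal_apply, funext_iff, Subtype.forall, Set.mem_range, not_exists]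
  rfl

theorem embedFactors_mul [DecidableEq κ] [Fintype n] [Semiring A] {e : κ → ι} (he : Injective e)
    (X Y : Matrix (κ → n) (κ → n) A) :
    embedFactors e (X * Y) = embedFactors e X * embedFactors e Y := by
  classical
  obtain ⟨σ, hσ⟩ := exists_embedFactors_eq_submatrix_blockDiagonal (A := A) (n := n) he
  rw [hσ, hσ, hσ, submatrix_mul_equiv, blockDiagonal_mul]

theorem embedFactors_one [Fintype n] [Semiring A] (e : κ → ι) :
    embedFactors e (1 : Matrix (κ → n) (κ → n) A) = 1 := by
  ext v w
  simp only [embedFactors_apply, one_apply, ← ite_and]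
  refine if_congr ⟨fun ⟨hoff, hon⟩ => funext fun j => ?_, fun h => by simp [h]⟩ rfl rfl
  by_cases hj : ∀ i, e i ≠ j
  · exact hoff j hj
  · push Not at hj
    obtain ⟨i, rfl⟩ := hj
    exact congrFun hon i

theorem embedFactors_embedFactors [DecidableEq κ] [Zero A] {κ' : Type*} [Fintype κ']
    {e : κ → ι} (he : Injective e) (e' : κ' → κ) (X : Matrix (κ' → n) (κ' → n) A) :
    embedFactors e (embedFactors e' X) = embedFactors (e ∘ e') X := by
  ext v w
  rw [embedFactors_apply, embedFactors_apply, embedFactors_apply, ← ite_and]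
  refine if_congr ⟨fun ⟨hoff, hoff'⟩ j hj => ?_, fun h => ⟨fun j hj => h j fun i => hj (e' i),
    fun i hi => h (e i) fun i' hi' => hi i' (he hi')⟩⟩ rfl rfl
  by_cases hj' : ∀ i, e i ≠ j
  · exact hoff j hj'
  · push Not at hj'
    obtain ⟨i, rfl⟩ := hj'
    exact hoff' i fun i' hi' => hj i' (congrArg e hi')

theorem embedFactors_mul_embedFactors_apply [Fintype n] [Semiring A] {κ' : Type*} [Fintype κ']
    {e : κ → ι} {e' : κ' → ι} (hd : ∀ i i', e i ≠ e' i') (X : Matrix (κ → n) (κ → n) A)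
    (Y : Matrix (κ' → n) (κ' → n) A) (v w : ι → n) :
    (embedFactors e X * embedFactors e' Y) v w =
      if ∀ j, (∀ i, e i ≠ j) → (∀ i, e' i ≠ j) → v j = w j
      then X (v ∘ e) (w ∘ e) * Y (v ∘ e') (w ∘ e') else 0 := by
  classical
  -- the only intermediate index contributing to the sum
  set u : ι → n := fun j => if ∃ i, e i = j then w j else v j
  have hue : u ∘ e = w ∘ e := funext fun i => if_pos ⟨i, rfl⟩
  have hue' : u ∘ e' = v ∘ e' := funext fun i' => if_neg fun ⟨i, hi⟩ => hd i i' hi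
  have hvu : ∀ j, (∀ i, e i ≠ j) → v j = u j := fun j hj => (if_neg (not_exists.2 hj)).symm
  have huw : (∀ j, (∀ i, e' i ≠ j) → u j = w j) ↔
      ∀ j, (∀ i, e i ≠ j) → (∀ i, e' i ≠ j) → v j = w j := by
    refine ⟨fun h j hj hj' => (hvu j hj).trans (h j hj'), fun h j hj' => ?_⟩
    by_cases hj : ∃ i, e i = j
    · exact if_pos hj
    · exact (if_neg hj).trans (h j (not_exists.1 hj) hj')
  rw [mul_apply, Finset.sum_eq_single u]
  · simp only [embedFactors_apply, if_pos hvu, hue, hue', ← huw, mul_ite, mul_zero]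
  · intro b _ hb
    simp only [embedFactors_apply, mul_ite, ite_mul, zero_mul, mul_zero]
    split_ifs with hbw hvb
    · refine absurd (funext fun j => ?_) hb
      by_cases hj : ∃ i, e i = j
      · obtain ⟨i, rfl⟩ := hj
        exact (hbw (e i) fun i' => (hd i i').symm).trans (if_pos ⟨i, rfl⟩).symm
      · exact (hvb j (not_exists.1 hj)).symm.trans (if_neg hj).symm
    all_goals rfl
  · simp

theorem embedFactors_commute [Fintype n] [Semiring A] {κ' : Type*} [Fintype κ'] {e : κ → ι}
    {e' : κ' → ι} (hd : ∀ i i', e i ≠ e' i') {X : Matrix (κ → n) (κ → n) A}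
    {Y : Matrix (κ' → n) (κ' → n) A} (hXY : ∀ a b c d, Commute (X a b) (Y c d)) :
    Commute (embedFactors e X) (embedFactors e' Y) := by
  ext v w
  rw [embedFactors_mul_embedFactors_apply hd, embedFactors_mul_embedFactors_apply
    fun i' i => (hd i i').symm, (hXY _ _ _ _).eq]
  exact if_congr ⟨fun h j hj' hj => h j hj hj', fun h j hj hj' => h j hj' hj⟩ rfl rfl

theorem embedFactors_map {B : Type*} [Zero A] [Zero B] (e : κ → ι)
    (X : Matrix (κ → n) (κ → n) A) (f : A → B) (hf : f 0 = 0) :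
    (embedFactors e X).map f = embedFactors e (X.map f) := by
  ext v w
  simp only [map_apply, embedFactors_apply, apply_ite f, hf]

def embedFactorsHom [DecidableEq κ] [Fintype n] [Semiring A] {e : κ → ι} (he : Injective e) :
    Matrix (κ → n) (κ → n) A →* Matrix (ι → n) (ι → n) A where
  toFun := embedFactors e
  map_one' := embedFactors_one e
  map_mul' := embedFactors_mul he

end Matrix

@[simps]
def finThreeArrowEquiv (α : Type*) : (Fin 3 → α) ≃ α × α × α where
  toFun v := (v 0, v 1, v 2)
  invFun x := ![x.1, x.2.1, x.2.2]
  left_inv v := by ext i; fin_cases i <;> rfl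
  right_inv _ := rfl

theorem Fin.castLE_comp_natAdd_injective {m p k : ℕ} (h : p + m ≤ k) :
    Injective (Fin.castLE h ∘ Fin.natAdd p) :=
  (Fin.castLE_injective h).comp (Fin.natAdd_injective m p)

theorem Fin.castLE_natAdd_comp_castSucc {m p k : ℕ} (h : p + (m + 1) ≤ k) :
    (Fin.castLE h ∘ Fin.natAdd p) ∘ Fin.castSucc =
      Fin.castLE (by omega : p + m ≤ k) ∘ Fin.natAdd p := by
  funext i; ext; simp

theorem Fin.castLE_natAdd_comp_succ {m p k : ℕ} (h : p + (m + 1) ≤ k) :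
    (Fin.castLE h ∘ Fin.natAdd p) ∘ Fin.succ =
      Fin.castLE (by omega : p + 1 + m ≤ k) ∘ Fin.natAdd (p + 1) := by
  funext i; ext; simp; omega

theorem up12_submatrix {N : ℕ} (X : Matrix (Fin N × Fin N) (Fin N × Fin N) ℂ) :
    (up12 X).submatrix (finThreeArrowEquiv _) (finThreeArrowEquiv _) =
      embedFactors Fin.castSucc (X.submatrix (finTwoArrowEquiv _) (finTwoArrowEquiv _)) := by
  ext a b
  simp [up12, Fin.forall_fin_succ]

theorem up23_submatrix {N : ℕ} (X : Matrix (Fin N × Fin N) (Fin N × Fin N) ℂ) :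
    (up23 X).submatrix (finThreeArrowEquiv _) (finThreeArrowEquiv _) =
      embedFactors Fin.succ (X.submatrix (finTwoArrowEquiv _) (finTwoArrowEquiv _)) := by
  ext a b
  simp [up23, Fin.forall_fin_succ]

theorem lift1_submatrix {N : ℕ} {A : Type} [Ring A] (L : Matrix (Fin N) (Fin N) A) :
    (lift1 L).submatrix (finTwoArrowEquiv _) (finTwoArrowEquiv _) =
      embedFactors Fin.castSucc (L.submatrix (Equiv.funUnique _ _) (Equiv.funUnique _ _)) := by
  ext a b
  simp [lift1, Fin.forall_fin_succ]

section Lifts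

variable {N k : ℕ} {A : Type} [Ring A]

theorem lift2_eq_embedFactors (X : Matrix (Fin N × Fin N) (Fin N × Fin N) A) {p : ℕ}
    (h : p + 2 ≤ k) :
    lift2 k X p = embedFactors (Fin.castLE h ∘ Fin.natAdd p)
      (X.submatrix (finTwoArrowEquiv _) (finTwoArrowEquiv _)) := by
  have hoff (j : Fin k) : (∀ i : Fin 2, Fin.castLE h (Fin.natAdd p i) ≠ j) ↔
      (j : ℕ) ≠ p ∧ (j : ℕ) ≠ p + 1 := by
    simp [Fin.forall_fin_two, Fin.ext_iff, eq_comm]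
  ext v w
  simp only [lift2, dif_pos (show p + 1 < k by omega), of_apply, embedFactors_apply, hoff,
    and_imp, submatrix_apply, finTwoArrowEquiv_apply, Function.comp_apply, mul_ite,
    mul_one, mul_zero]
  rfl

theorem lift2_of_lt (X : Matrix (Fin N × Fin N) (Fin N × Fin N) A) {p : ℕ} (h : k < p + 2) :
    lift2 k X p = 1 := by
  ext v w
  simp [lift2, dif_neg (show ¬ p + 1 < k by omega), one_apply]

theorem liftV_eq_embedFactors (X : Matrix (Fin N) (Fin N) A) {p : ℕ} (h : p + 1 ≤ k) :
    liftV k X p = embedFactors (Fin.castLE h ∘ Fin.natAdd p)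
      (X.submatrix (Equiv.funUnique _ _) (Equiv.funUnique _ _)) := by
  have hoff (j : Fin k) : (∀ i : Fin 1, Fin.castLE h (Fin.natAdd p i) ≠ j) ↔ (j : ℕ) ≠ p := by
    simp [Fin.ext_iff, eq_comm]
  ext v w
  simp only [liftV, dif_pos (show p < k by omega), of_apply, embedFactors_apply, hoff,
    submatrix_apply, Equiv.funUnique_apply, Function.comp_apply, mul_ite, mul_one, mul_zero]
  rfl

theorem liftV_of_le (X : Matrix (Fin N) (Fin N) A) {p : ℕ} (h : k ≤ p) : liftV k X p = 1 := by
  ext v w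
  simp [liftV, dif_neg (show ¬ p < k by omega), one_apply]

theorem lift2_mul (X Y : Matrix (Fin N × Fin N) (Fin N × Fin N) A) (p : ℕ) :
    lift2 k (X * Y) p = lift2 k X p * lift2 k Y p := by
  by_cases h : p + 2 ≤ k
  · simp only [lift2_eq_embedFactors _ h, ← embedFactors_mul (Fin.castLE_comp_natAdd_injective h),
      submatrix_mul_equiv]
  · simp only [lift2_of_lt _ (not_le.1 h), mul_one]

theorem lift2_one (p : ℕ) : lift2 k (1 : Matrix (Fin N × Fin N) (Fin N × Fin N) A) p = 1 := by
  by_cases h : p + 2 ≤ k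
  · rw [lift2_eq_embedFactors _ h, submatrix_one_equiv, embedFactors_one]
  · exact lift2_of_lt _ (not_le.1 h)

theorem lift2_mul_lift2_of_mul_eq_one {X Y : Matrix (Fin N × Fin N) (Fin N × Fin N) A}
    (h : X * Y = 1) (p : ℕ) : lift2 k X p * lift2 k Y p = 1 := by
  rw [← lift2_mul, h, lift2_one]

theorem lift2_commute_lift2 {X Y : Matrix (Fin N × Fin N) (Fin N × Fin N) A}
    (hXY : ∀ a b c d, Commute (X a b) (Y c d)) {p q : ℕ} (hpq : p + 2 ≤ q) :
    Commute (lift2 k X p) (lift2 k Y q) := by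
  by_cases hq : q + 2 ≤ k
  · rw [lift2_eq_embedFactors _ (by omega), lift2_eq_embedFactors _ hq]
    exact embedFactors_commute (fun i i' h => by simp [Fin.ext_iff] at h; omega)
      fun _ _ _ _ => hXY _ _ _ _
  · rw [lift2_of_lt _ (not_le.1 hq)]
    exact Commute.one_right _

theorem liftV_commute_lift2 {X : Matrix (Fin N) (Fin N) A}
    {Y : Matrix (Fin N × Fin N) (Fin N × Fin N) A} (hXY : ∀ a b c d, Commute (X a b) (Y c d))
    {m p : ℕ} (hmp : m ≠ p) (hmp' : m ≠ p + 1) : Commute (liftV k X m) (lift2 k Y p) := by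
  by_cases hm : m + 1 ≤ k
  · by_cases hp : p + 2 ≤ k
    · rw [liftV_eq_embedFactors _ hm, lift2_eq_embedFactors _ hp]
      exact embedFactors_commute (fun i i' h => by simp [Fin.ext_iff] at h; omega)
        fun _ _ _ _ => hXY _ _ _ _
    · rw [lift2_of_lt _ (not_le.1 hp)]
      exact Commute.one_right _
  · rw [liftV_of_le _ (by omega)]
    exact Commute.one_left _

theorem liftV_zero_eq_lift2_lift1 (L : Matrix (Fin N) (Fin N) A) (h : 2 ≤ k) :
    liftV k L 0 = lift2 k (lift1 L) 0 := by
  rw [lift2_eq_embedFactors _ (by omega), lift1_submatrix,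
    embedFactors_embedFactors (Fin.castLE_comp_natAdd_injective (p := 0) (m := 2) h),
    Fin.castLE_natAdd_comp_castSucc (p := 0) (m := 1) h, liftV_eq_embedFactors]

theorem lift2_liftV_reflection {RA : Matrix (Fin N × Fin N) (Fin N × Fin N) A}
    {L : Matrix (Fin N) (Fin N) A}
    (hRE : RA * lift1 L * RA * lift1 L = lift1 L * RA * lift1 L * RA) :
    lift2 k RA 0 * liftV k L 0 * lift2 k RA 0 * liftV k L 0 =
      liftV k L 0 * lift2 k RA 0 * liftV k L 0 * lift2 k RA 0 := by
  by_cases hk : 2 ≤ k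
  · simpa only [liftV_zero_eq_lift2_lift1 L hk, lift2_mul] using congrArg (lift2 k · 0) hRE
  · simp only [lift2_of_lt RA (show k < 0 + 2 by omega), one_mul, mul_one]

theorem lift2_braid {R : Matrix (Fin N × Fin N) (Fin N × Fin N) ℂ} (f : ℂ →+* A)
    (hYB : up12 R * up23 R * up12 R = up23 R * up12 R * up23 R) {p : ℕ} (h : p + 3 ≤ k) :
    lift2 k (R.map f) p * lift2 k (R.map f) (p + 1) * lift2 k (R.map f) p =
      lift2 k (R.map f) (p + 1) * lift2 k (R.map f) p * lift2 k (R.map f) (p + 1) := by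
  let Ψ := (embedFactorsHom (Fin.castLE_comp_natAdd_injective h)).comp
    (f.mapMatrix.toMonoidHom.comp
      (reindexRingEquiv ℂ (finThreeArrowEquiv (Fin N)).symm).toMonoidHom)
  have h12 : Ψ (up12 R) = lift2 k (R.map f) p := by
    change embedFactors _ (((up12 R).submatrix (finThreeArrowEquiv _)
      (finThreeArrowEquiv _)).map f) = _
    rw [up12_submatrix, embedFactors_map _ _ _ (map_zero f),
      embedFactors_embedFactors (Fin.castLE_comp_natAdd_injective h), ← submatrix_map,
      Fin.castLE_natAdd_comp_castSucc (m := 2) h, lift2_eq_embedFactors]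
  have h23 : Ψ (up23 R) = lift2 k (R.map f) (p + 1) := by
    change embedFactors _ (((up23 R).submatrix (finThreeArrowEquiv _)
      (finThreeArrowEquiv _)).map f) = _
    rw [up23_submatrix, embedFactors_map _ _ _ (map_zero f),
      embedFactors_embedFactors (Fin.castLE_comp_natAdd_injective h), ← submatrix_map,
      Fin.castLE_natAdd_comp_succ (m := 2) h, lift2_eq_embedFactors]
  simpa only [map_mul, h12, h23] using congrArg Ψ hYB

end Lifts

section Products

variable {N k : ℕ} {A : Type} [Ring A] {RA RinvA : Matrix (Fin N × Fin N) (Fin N × Fin N) A}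
  (L : Matrix (Fin N) (Fin N) A)

theorem LbarProd_eq_prod (n : ℕ) :
    LbarProd k RA RinvA L n = ((List.range (n + 1)).map (Lbar k RA RinvA L)).prod := by
  induction n with
  | zero => simp [LbarProd]
  | succ n ih =>
    rw [LbarProd, ih, List.range_succ (n := n + 1), List.map_append, List.prod_append]; simp

theorem LundProd_eq_prod (n : ℕ) :
    LundProd k RA RinvA L n = ((List.range (n + 1)).reverse.map (Lund k RA RinvA L)).prod := by
  induction n with
  | zero => simp [LundProd]
  | succ n ih => rw [LundProd, ih, List.range_succ (n := n + 1)]; simp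

variable {s : ℕ → (Matrix (Fin k → Fin N) (Fin k → Fin N) A)ˣ}

theorem Lbar_eq_conjAlong (hs : ∀ i, ↑(s i) = lift2 k RA i)
    (hs' : ∀ i, ↑(s i)⁻¹ = lift2 k RinvA i) :
    Lbar k RA RinvA L = conjAlong s (liftV k L 0) := by
  funext n
  induction n with
  | zero => rfl
  | succ n ih => rw [Lbar, conjAlong, ih, hs, hs']

theorem Lund_eq_conjAlong_inv (hs : ∀ i, ↑(s i) = lift2 k RA i)
    (hs' : ∀ i, ↑(s i)⁻¹ = lift2 k RinvA i) :
    Lund k RA RinvA L = conjAlong (fun i => (s i)⁻¹) (liftV k L 0) := by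
  funext n
  induction n with
  | zero => rfl
  | succ n ih => rw [Lund, conjAlong, ih, inv_inv, hs, hs']

end Products

theorem barProd_eq_undProd_general (N : ℕ)
    (R Rinv : Matrix (Fin N × Fin N) (Fin N × Fin N) ℂ)
    (hYB : up12 R * up23 R * up12 R = up23 R * up12 R * up23 R)
    (hRinv : R * Rinv = 1 ∧ Rinv * R = 1)
    (A : Type) [Ring A] [Algebra ℂ A] (L : Matrix (Fin N) (Fin N) A)
    (hRE : R.map (algebraMap ℂ A) * lift1 L * R.map (algebraMap ℂ A) * lift1 L
      = lift1 L * R.map (algebraMap ℂ A) * lift1 L * R.map (algebraMap ℂ A)) :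
    ∀ k : ℕ, 1 ≤ k →
      LbarProd k (R.map (algebraMap ℂ A)) (Rinv.map (algebraMap ℂ A)) L (k - 1)
        = LundProd k (R.map (algebraMap ℂ A)) (Rinv.map (algebraMap ℂ A)) L (k - 1) := by
  intro k _
  have hmap {X Y : Matrix (Fin N × Fin N) (Fin N × Fin N) ℂ} (h : X * Y = 1) :
      X.map (algebraMap ℂ A) * Y.map (algebraMap ℂ A) = 1 := by
    rw [← Matrix.map_mul, h, Matrix.map_one _ (map_zero _) (map_one _)]
  let s (i : ℕ) : (Matrix (Fin k → Fin N) (Fin k → Fin N) A)ˣ :=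
    ⟨_, _, lift2_mul_lift2_of_mul_eq_one (hmap hRinv.1) i,
      lift2_mul_lift2_of_mul_eq_one (hmap hRinv.2) i⟩
  have hcentral (a b : Fin N × Fin N) (x : A) : Commute (R.map (algebraMap ℂ A) a b) x :=
    Algebra.commutes (R a b) x
  rw [LbarProd_eq_prod, LundProd_eq_prod,
    Lbar_eq_conjAlong L (s := s) (fun _ => rfl) (fun _ => rfl),
    Lund_eq_conjAlong_inv L (s := s) (fun _ => rfl) (fun _ => rfl)]
  refine prod_conjAlong_eq_prod_conjAlong_inv (fun i hi => Units.ext ?_)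
    (fun i j hij => Commute.units_of_val (lift2_commute_lift2 (X := R.map (algebraMap ℂ A))
      (Y := R.map (algebraMap ℂ A)) (fun _ _ _ _ => hcentral _ _ _) hij))
    (fun j hj => (liftV_commute_lift2 (X := L) (Y := R.map (algebraMap ℂ A))
      (fun _ _ _ _ => (hcentral _ _ _).symm) (by omega) (by omega)).symm)
    (lift2_liftV_reflection hRE)
  exact lift2_braid _ hYB (by omega)

/-- If `L` satisfies the reflection equation, then for every `k ≥ 1` the two
ordered products of copies coincide:
`L_{1̄} L_{2̄} ⋯ L_{k̄} = L_{k̲} L_{k−1̲} ⋯ L_{1̲}` in `Mat_{N^k}(A)`. -/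
theorem barProd_eq_undProd (N : ℕ) (hN : 1 ≤ N)
    (R Rinv : Matrix (Fin N × Fin N) (Fin N × Fin N) ℂ)
    (hYB : up12 R * up23 R * up12 R = up23 R * up12 R * up23 R)
    (hRinv : R * Rinv = 1 ∧ Rinv * R = 1)
    (A : Type) [Ring A] [Algebra ℂ A] (L : Matrix (Fin N) (Fin N) A)
    (hRE : R.map (algebraMap ℂ A) * lift1 L * R.map (algebraMap ℂ A) * lift1 L
      = lift1 L * R.map (algebraMap ℂ A) * lift1 L * R.map (algebraMap ℂ A)) :
    ∀ k : ℕ, 1 ≤ k →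
      LbarProd k (R.map (algebraMap ℂ A)) (Rinv.map (algebraMap ℂ A)) L (k - 1)
        = LundProd k (R.map (algebraMap ℂ A)) (Rinv.map (algebraMap ℂ A)) L (k - 1) :=
  barProd_eq_undProd_general N R Rinv hYB hRinv A L hRE
end

section
/- Let R be an R-matrix on V⊗V, V = ℂ^N, let A be an associative unital ℂ-algebra, let η ∈ ℂ∖{0}, and let L, M ∈ Mat_N(A) be invertible matrices over A (i.e., possessing two-sided inverses L⁻¹, M⁻¹ ∈ Mat_N(A)) satisfying: (i) R₁L₁R₁L₁ = L₁R₁L₁R₁; (ii) R₁M₁R₁M₁ = M₁R₁M₁R₁; (iii) R₁L₁R₁M₁ = η·M₁R₁L₁R₁⁻¹. Then the matrix Q := L M⁻¹ L⁻¹ M satisfies: R₁Q₁R₁Q₁ = Q₁R₁Q₁R₁ and R₁Q₁R₁M₁ = M₁R₁Q₁R₁ in Mat_{N²}(A). -/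
open Matrix BigOperators

/-! The relation `r X r Y = Y r X r` just says that `Y` commutes with `r X r`. Work in the group of
units of `Mat_{N²}(A)`, where `η` becomes a central unit `z`. Relation (iii) together with (ii),
resp. (i), shows that `r q r` commutes with `m`, resp. `l`; hence it commutes with the whole subgroup
generated by `l` and `m`, in particular with `q = ⁅l, m⁻¹⁆`. -/

open scoped commutatorElement

def BraidCommute {G : Type*} [Mul G] (r x y : G) : Prop := r * x * r * y = y * r * x * r

theorem braidCommute_iff_commute {G : Type*} [Semigroup G] {r x y : G} :
    BraidCommute r x y ↔ Commute (r * x * r) y := by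
  simp only [BraidCommute, Commute, SemiconjBy, mul_assoc]

section Group
variable {G : Type*} [Group G] {r l m z : G}

theorem commute_mul_commutatorElement_inv_mul_right (hm : BraidCommute r m m)
    (hz : z ∈ Subgroup.center G) (hlm : r * l * r * m = z * (m * r * l * r⁻¹)) :
    Commute (r * ⁅l, m⁻¹⁆ * r) m := by
  have hc : ∀ g, g * z⁻¹ = z⁻¹ * g := Subgroup.mem_center_iff.mp (inv_mem hz)
  have hm₁ : m * r * m = r⁻¹ * (m * r * m * r) := by rw [← hm]; group
  have hm₂ : m⁻¹ * r * m * r = r * m * r * m⁻¹ := by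
    rw [show m⁻¹ * r * m * r = m⁻¹ * (r * m * r * m) * m⁻¹ by group, hm]; group
  have hlm₂ : r * l * r * m * r = z * (m * r * l) := by rw [hlm]; group
  have hlm₁ : l⁻¹ * r⁻¹ * m * r = z⁻¹ * (r * m * r * l⁻¹) := by
    rw [show l⁻¹ * r⁻¹ * m * r = l⁻¹ * r⁻¹ * (z⁻¹ * (z * (m * r * l))) * l⁻¹ by group, ← hlm₂,
      ← mul_assoc (l⁻¹ * r⁻¹), hc]
    group
  calc r * ⁅l, m⁻¹⁆ * r * m
      = r * l * m⁻¹ * l⁻¹ * (m * r * m) := by rw [commutatorElement_def, inv_inv]; group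
    _ = r * l * m⁻¹ * (l⁻¹ * r⁻¹ * m * r) * m * r := by rw [hm₁]; group
    _ = r * l * m⁻¹ * (z⁻¹ * (r * m * r * l⁻¹)) * m * r := by rw [hlm₁]
    _ = z⁻¹ * (r * l * (m⁻¹ * r * m * r) * l⁻¹ * m * r) := by
      rw [← mul_assoc (r * l * m⁻¹), hc]; group
    _ = z⁻¹ * (r * l * r * m * r) * m⁻¹ * l⁻¹ * m * r := by rw [hm₂]; group
    _ = m * (r * ⁅l, m⁻¹⁆ * r) := by rw [hlm₂, commutatorElement_def, inv_inv]; group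

theorem commute_mul_commutatorElement_inv_mul_left (hl : BraidCommute r l l)
    (hz : z ∈ Subgroup.center G) (hlm : r * l * r * m = z * (m * r * l * r⁻¹)) :
    Commute (r * ⁅l, m⁻¹⁆ * r) l := by
  have hc : ∀ g, g * z = z * g := Subgroup.mem_center_iff.mp hz
  have hc' : ∀ g, g * z⁻¹ = z⁻¹ * g := Subgroup.mem_center_iff.mp (inv_mem hz)
  have hl₁ : l⁻¹ * r * l * r = r * l * r * l⁻¹ := by
    rw [show l⁻¹ * r * l * r = l⁻¹ * (r * l * r * l) * l⁻¹ by group, hl]; group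
  have hlm₁ : m * r * l = z⁻¹ * (r * l * r * m * r) := by rw [hlm]; group
  have hlm₂ : m⁻¹ * r * l * r = z * (r * l * r⁻¹ * m⁻¹) := by
    rw [show m⁻¹ * r * l * r = m⁻¹ * (r * l * r * m) * m⁻¹ by group, hlm,
      ← mul_assoc m⁻¹, hc m⁻¹]
    group
  calc r * ⁅l, m⁻¹⁆ * r * l
      = r * l * m⁻¹ * l⁻¹ * (m * r * l) := by rw [commutatorElement_def, inv_inv]; group
    _ = z⁻¹ * (r * l * m⁻¹ * (l⁻¹ * r * l * r) * m * r) := by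
      rw [hlm₁, ← mul_assoc (r * l * m⁻¹ * l⁻¹), hc']; group
    _ = z⁻¹ * (r * l * (m⁻¹ * r * l * r) * l⁻¹ * m * r) := by rw [hl₁]; group
    _ = z⁻¹ * (r * l * (z * (r * l * r⁻¹ * m⁻¹)) * l⁻¹ * m * r) := by rw [hlm₂]
    _ = r * l * r * l * r⁻¹ * m⁻¹ * l⁻¹ * m * r := by
      rw [← mul_assoc (r * l), hc (r * l)]; group
    _ = l * (r * ⁅l, m⁻¹⁆ * r) := by rw [hl, commutatorElement_def, inv_inv]; group

theorem braidCommute_commutatorElement_inv (hl : BraidCommute r l l) (hm : BraidCommute r m m)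
    (hz : z ∈ Subgroup.center G) (hlm : r * l * r * m = z * (m * r * l * r⁻¹)) :
    BraidCommute r ⁅l, m⁻¹⁆ ⁅l, m⁻¹⁆ ∧ BraidCommute r ⁅l, m⁻¹⁆ m := by
  have hL := commute_mul_commutatorElement_inv_mul_left hl hz hlm
  have hM := commute_mul_commutatorElement_inv_mul_right hm hz hlm
  simp only [braidCommute_iff_commute]
  refine ⟨?_, hM⟩
  convert ((hL.mul_right hM.inv_right).mul_right hL.inv_right).mul_right hM using 1
  rw [commutatorElement_def, inv_inv]

end Group

theorem Units.braidCommute_val_iff {M : Type*} [Monoid M] {r x y : Mˣ} :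
    BraidCommute (r : M) x y ↔ BraidCommute r x y := by
  simp only [BraidCommute, Units.ext_iff, Units.val_mul]

section Lift
variable {N : ℕ} {A : Type} [Ring A]

theorem lift1_eq_blockDiagonal (X : Matrix (Fin N) (Fin N) A) :
    lift1 X = blockDiagonal fun _ => X := by
  ext ⟨i, a⟩ ⟨j, b⟩
  simp [lift1, blockDiagonal_apply', mul_ite]

variable (N A) in
def lift1Hom : Matrix (Fin N) (Fin N) A →* Matrix (Fin N × Fin N) (Fin N × Fin N) A where
  toFun := lift1
  map_one' := by rw [lift1_eq_blockDiagonal, ← Pi.one_def, blockDiagonal_one]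
  map_mul' X Y := by simp only [lift1_eq_blockDiagonal, ← blockDiagonal_mul]

@[simp]
theorem lift1Hom_apply (X : Matrix (Fin N) (Fin N) A) : lift1Hom N A X = lift1 X := rfl

theorem lift1_mul (X Y : Matrix (Fin N) (Fin N) A) : lift1 (X * Y) = lift1 X * lift1 Y :=
  (lift1Hom N A).map_mul X Y

end Lift

theorem adjoint_subalgebra_Q_general (N : ℕ)
    (R Rinv : Matrix (Fin N × Fin N) (Fin N × Fin N) ℂ)
    (hRinv : R * Rinv = 1 ∧ Rinv * R = 1)
    (A : Type) [Ring A] [Algebra ℂ A] (η : ℂ) (hη : η ≠ 0)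
    (L M Linv Minv : Matrix (Fin N) (Fin N) A)
    (hL : L * Linv = 1 ∧ Linv * L = 1)
    (hM : M * Minv = 1 ∧ Minv * M = 1)
    (hREL : R.map (algebraMap ℂ A) * lift1 L * R.map (algebraMap ℂ A) * lift1 L
        = lift1 L * R.map (algebraMap ℂ A) * lift1 L * R.map (algebraMap ℂ A))
    (hREM : R.map (algebraMap ℂ A) * lift1 M * R.map (algebraMap ℂ A) * lift1 M
        = lift1 M * R.map (algebraMap ℂ A) * lift1 M * R.map (algebraMap ℂ A))
    (hOFP : R.map (algebraMap ℂ A) * lift1 L * R.map (algebraMap ℂ A) * lift1 M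
        = algebraMap ℂ A η
            • (lift1 M * R.map (algebraMap ℂ A) * lift1 L * Rinv.map (algebraMap ℂ A))) :
    (R.map (algebraMap ℂ A) * lift1 (L * Minv * Linv * M) * R.map (algebraMap ℂ A)
          * lift1 (L * Minv * Linv * M)
        = lift1 (L * Minv * Linv * M) * R.map (algebraMap ℂ A)
          * lift1 (L * Minv * Linv * M) * R.map (algebraMap ℂ A))
      ∧ (R.map (algebraMap ℂ A) * lift1 (L * Minv * Linv * M) * R.map (algebraMap ℂ A)
            * lift1 M
          = lift1 M * R.map (algebraMap ℂ A) * lift1 (L * Minv * Linv * M)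
            * R.map (algebraMap ℂ A)) := by
  let B := Matrix (Fin N × Fin N) (Fin N × Fin N) A
  let r : Bˣ := Units.map (algebraMap ℂ A).mapMatrix.toMonoidHom ⟨R, Rinv, hRinv.1, hRinv.2⟩
  let l : Bˣ := Units.map (lift1Hom N A) ⟨L, Linv, hL.1, hL.2⟩
  let m : Bˣ := Units.map (lift1Hom N A) ⟨M, Minv, hM.1, hM.2⟩
  let z : Bˣ := Units.map (algebraMap ℂ B).toMonoidHom (Units.mk0 η hη)
  have hr : (r : B) = R.map (algebraMap ℂ A) := rfl
  have hl : (l : B) = lift1 L := rfl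
  have hm : (m : B) = lift1 M := rfl
  have hz : z ∈ Subgroup.center Bˣ :=
    Subgroup.mem_center_iff.mpr fun g => Units.ext (Algebra.commutes η (g : B)).symm
  have hlm : r * l * r * m = z * (m * r * l * r⁻¹) := by
    refine Units.ext ?_
    simpa [r, l, m, z, Algebra.smul_def] using hOFP
  have hq : ((⁅l, m⁻¹⁆ : Bˣ) : B) = lift1 (L * Minv * Linv * M) := by
    simp [l, m, commutatorElement_def, lift1_mul]
  obtain ⟨hqq, hqm⟩ := braidCommute_commutatorElement_inv
    (Units.braidCommute_val_iff.mp (by rw [hr, hl]; exact hREL))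
    (Units.braidCommute_val_iff.mp (by rw [hr, hm]; exact hREM)) hz hlm
  rw [← Units.braidCommute_val_iff, hq, hr] at hqq hqm
  rw [hm] at hqm
  exact ⟨hqq, hqm⟩

/-- In the right-invariant braided differential algebra built from two copies
of the reflection equation algebra, the matrix `Q = L M⁻¹ L⁻¹ M` satisfies the
reflection equation and commutes adjointly with `M`:
`R₁Q₁R₁Q₁ = Q₁R₁Q₁R₁` and `R₁Q₁R₁M₁ = M₁R₁Q₁R₁`. -/
theorem adjoint_subalgebra_Q (N : ℕ) (hN : 1 ≤ N)
    (R Rinv : Matrix (Fin N × Fin N) (Fin N × Fin N) ℂ)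
    (hYB : up12 R * up23 R * up12 R = up23 R * up12 R * up23 R)
    (hRinv : R * Rinv = 1 ∧ Rinv * R = 1)
    (A : Type) [Ring A] [Algebra ℂ A] (η : ℂ) (hη : η ≠ 0)
    (L M Linv Minv : Matrix (Fin N) (Fin N) A)
    (hL : L * Linv = 1 ∧ Linv * L = 1)
    (hM : M * Minv = 1 ∧ Minv * M = 1)
    (hREL : R.map (algebraMap ℂ A) * lift1 L * R.map (algebraMap ℂ A) * lift1 L
        = lift1 L * R.map (algebraMap ℂ A) * lift1 L * R.map (algebraMap ℂ A))
    (hREM : R.map (algebraMap ℂ A) * lift1 M * R.map (algebraMap ℂ A) * lift1 M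
        = lift1 M * R.map (algebraMap ℂ A) * lift1 M * R.map (algebraMap ℂ A))
    (hOFP : R.map (algebraMap ℂ A) * lift1 L * R.map (algebraMap ℂ A) * lift1 M
        = algebraMap ℂ A η
            • (lift1 M * R.map (algebraMap ℂ A) * lift1 L * Rinv.map (algebraMap ℂ A))) :
    (R.map (algebraMap ℂ A) * lift1 (L * Minv * Linv * M) * R.map (algebraMap ℂ A)
          * lift1 (L * Minv * Linv * M)
        = lift1 (L * Minv * Linv * M) * R.map (algebraMap ℂ A)
          * lift1 (L * Minv * Linv * M) * R.map (algebraMap ℂ A))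
      ∧ (R.map (algebraMap ℂ A) * lift1 (L * Minv * Linv * M) * R.map (algebraMap ℂ A)
            * lift1 M
          = lift1 M * R.map (algebraMap ℂ A) * lift1 (L * Minv * Linv * M)
            * R.map (algebraMap ℂ A)) :=
  adjoint_subalgebra_Q_general N R Rinv hRinv A η hη L M Linv Minv hL hM hREL hREM hOFP
end

section
/- Let m ≥ 1 and η₀ ∈ ℂ, and for 1 ≤ i,j ≤ m let κ_i^j be the derivation of the polynomial algebra ℂ[x₁,…,x_m] given by κ_i^j = x_i·∂/∂x_j + η₀·δ_i^j·Σ_{k=1}^m x_k·∂/∂x_k. Then: (a) these derivations realize the Lie algebra gl(m): ⁅κ_i^j, κ_k^l⁆ = δ_k^j·κ_i^l − δ_i^l·κ_k^j for all i,j,k,l; (b) as ℂ-linear operators on ℂ[x₁,…,x_m], the commutator with multiplication operators satisfies κ_i^j∘M_{x_p} − M_{x_p}∘κ_i^j = δ_p^j·M_{x_i} + η₀·δ_i^j·M_{x_p} for all i,j,p, where M_g denotes multiplication by the polynomial g. -/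
/-!
The operators `x_i ∂_j` are derivations of `ℂ[x₁,…,x_m]`, so their commutators are again
derivations and are determined by their values on the generators `x_n`; comparing these values
gives the `gl(m)` relations for the `x_i ∂_j` and shows that the Euler derivation
`E = Σ_k x_k ∂_k` commutes with every `x_i ∂_j`. Adding `η₀ δ_i^j E` to `x_i ∂_j` then preserves
the `gl(m)` relations, since the extra terms `δ_k^j δ_i^l η₀ E` on both sides cancel.
For (b), `D ∘ M_a - M_a ∘ D = M_{D a}` for every derivation `D`, and
`κ_i^j x_p = δ_p^j x_i + η₀ δ_i^j x_p`.
-/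

open MvPolynomial BigOperators

/-- The vector field `κ_i^j = x_i ∂/∂x_j + η₀ δ_i^j Σ_k x_k ∂/∂x_k` acting on
the polynomial algebra `ℂ[x₁,…,x_m]`. -/
noncomputable def kappaGL (m : ℕ) (η₀ : ℂ) (i j : Fin m) :
    Module.End ℂ (MvPolynomial (Fin m) ℂ) :=
  LinearMap.mulLeft ℂ (X i) ∘ₗ (pderiv j).toLinearMap
    + (if i = j then η₀ else 0) •
        ∑ k : Fin m, LinearMap.mulLeft ℂ (X k) ∘ₗ (pderiv k).toLinearMap

section GLFamily

variable {R A ι : Type*} [CommRing R] [Ring A] [Algebra R A] [DecidableEq ι]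

variable (R) in
/-- `x` satisfies the commutation relations of the matrix units `E_ij` of `gl(ι)`. -/
def IsGLFamily (x : ι → ι → A) : Prop :=
  ∀ i j k l, x i j * x k l - x k l * x i j
    = (if k = j then (1 : R) else 0) • x i l - (if i = l then (1 : R) else 0) • x k j

theorem IsGLFamily.add_smul_of_commute {x : ι → ι → A} (hx : IsGLFamily R x) {e : A}
    (he : ∀ i j, Commute e (x i j)) (η : R) :
    IsGLFamily R fun i j => x i j + (if i = j then η else 0) • e := by
  intro i j k l
  have hδ : (if k = j then (1 : R) else 0) * (if i = l then η else 0)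
      = (if i = l then (1 : R) else 0) * (if k = j then η else 0) := by
    split_ifs <;> simp
  have hxe : ∀ a b, x a b * e = e * x a b := fun a b => (he a b).eq.symm
  simp only [mul_add, add_mul, smul_mul_assoc, mul_smul_comm, smul_add, smul_smul, hxe, hδ]
  rw [← sub_eq_zero, ← sub_eq_zero.mpr (hx i j k l)]
  module

end GLFamily

theorem Derivation.comp_mulLeft_sub_mulLeft_comp {R A : Type*} [CommRing R] [CommRing A]
    [Algebra R A] (D : Derivation R A A) (a : A) :
    (D : Module.End R A) ∘ₗ LinearMap.mulLeft R a - LinearMap.mulLeft R a ∘ₗ D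
      = LinearMap.mulLeft R (D a) := by
  ext f
  simp [D.leibniz, mul_comm]

namespace MvPolynomial

variable (R : Type*) {σ : Type*} [CommRing R]

noncomputable def xMulPderiv (i j : σ) : Derivation R (MvPolynomial σ R) (MvPolynomial σ R) :=
  (X i : MvPolynomial σ R) • pderiv j

variable (σ) in
noncomputable def eulerDerivation [Fintype σ] :
    Derivation R (MvPolynomial σ R) (MvPolynomial σ R) :=
  ∑ k, xMulPderiv R k k

variable {R}

theorem xMulPderiv_apply (i j : σ) (f : MvPolynomial σ R) :
    xMulPderiv R i j f = X i * pderiv j f :=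
  rfl

theorem eulerDerivation_apply [Fintype σ] (f : MvPolynomial σ R) :
    eulerDerivation R σ f = ∑ k, X k * pderiv k f := by
  rw [eulerDerivation, ← Derivation.coeFnAddMonoidHom_apply, map_sum, Finset.sum_apply]
  rfl

variable [DecidableEq σ]

@[simp]
theorem xMulPderiv_X (i j n : σ) :
    xMulPderiv R i j (X n) = if n = j then X i else 0 := by
  simp [xMulPderiv, pderiv_X, Pi.single_apply]

@[simp]
theorem eulerDerivation_X [Fintype σ] (n : σ) : eulerDerivation R σ (X n) = X n := by
  simp [eulerDerivation_apply, pderiv_X, Pi.single_apply]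

theorem lie_xMulPderiv (i j k l : σ) :
    ⁅xMulPderiv R i j, xMulPderiv R k l⁆
      = (if k = j then (1 : R) else 0) • xMulPderiv R i l
        - (if i = l then (1 : R) else 0) • xMulPderiv R k j := by
  refine derivation_ext fun n => ?_
  simp only [Derivation.commutator_apply, Derivation.coe_sub, Pi.sub_apply, ite_smul, one_smul,
    zero_smul, xMulPderiv_X]
  split_ifs <;> simp <;> grind

theorem lie_eulerDerivation_xMulPderiv [Fintype σ] (i j : σ) :
    ⁅eulerDerivation R σ, xMulPderiv R i j⁆ = 0 := by
  refine derivation_ext fun n => ?_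
  simp only [Derivation.commutator_apply, xMulPderiv_X, eulerDerivation_X]
  split_ifs <;> simp

theorem isGLFamily_xMulPderiv :
    IsGLFamily R fun i j : σ => (xMulPderiv R i j : Module.End R (MvPolynomial σ R)) := by
  intro i j k l
  have h := congrArg (↑· : Derivation R _ _ → Module.End R (MvPolynomial σ R))
    (lie_xMulPderiv (R := R) i j k l)
  rwa [Derivation.commutator_coe_linear_map, Ring.lie_def, Derivation.coe_sub_linearMap,
    Derivation.coe_smul_linearMap, Derivation.coe_smul_linearMap] at h

theorem commute_eulerDerivation_xMulPderiv [Fintype σ] (i j : σ) :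
    Commute (eulerDerivation R σ : Module.End R (MvPolynomial σ R)) (xMulPderiv R i j) := by
  have h := congrArg (↑· : Derivation R _ _ → Module.End R (MvPolynomial σ R))
    (lie_eulerDerivation_xMulPderiv (R := R) i j)
  rw [Derivation.commutator_coe_linear_map, Ring.lie_def, Derivation.coe_zero_linearMap,
    sub_eq_zero] at h
  exact h

end MvPolynomial

theorem kappaGL_eq (m : ℕ) (η₀ : ℂ) (i j : Fin m) :
    kappaGL m η₀ i j
      = ↑(xMulPderiv ℂ i j + (if i = j then η₀ else 0) • eulerDerivation ℂ (Fin m)) := by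
  refine LinearMap.ext fun f => ?_
  split_ifs <;> simp [kappaGL, xMulPderiv_apply, eulerDerivation_apply, *]

theorem kappaGL_relations_general (m : ℕ) (η₀ : ℂ) :
    (∀ i j k l : Fin m,
      kappaGL m η₀ i j ∘ₗ kappaGL m η₀ k l - kappaGL m η₀ k l ∘ₗ kappaGL m η₀ i j
        = (if k = j then (1 : ℂ) else 0) • kappaGL m η₀ i l
          - (if i = l then (1 : ℂ) else 0) • kappaGL m η₀ k j)
    ∧ (∀ i j p : Fin m,
      kappaGL m η₀ i j ∘ₗ LinearMap.mulLeft ℂ (X p)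
          - LinearMap.mulLeft ℂ (X p) ∘ₗ kappaGL m η₀ i j
        = (if p = j then (1 : ℂ) else 0) • LinearMap.mulLeft ℂ (X i)
          + (if i = j then η₀ else 0) • LinearMap.mulLeft ℂ (X p)) := by
  refine ⟨fun i j k l => ?_, fun i j p => ?_⟩
  · have h := isGLFamily_xMulPderiv.add_smul_of_commute commute_eulerDerivation_xMulPderiv η₀
      i j k l
    simpa only [kappaGL_eq, Derivation.coe_add_linearMap, Derivation.coe_smul_linearMap,
      ← Module.End.mul_eq_comp] using h
  · rw [kappaGL_eq, Derivation.comp_mulLeft_sub_mulLeft_comp]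
    refine LinearMap.ext fun f => ?_
    split_ifs <;> simp_all [add_mul]

/-- (a) The operators `κ_i^j` realize the Lie algebra `gl(m)`:
`⁅κ_i^j, κ_k^l⁆ = δ_k^j κ_i^l − δ_i^l κ_k^j`;
(b) the commutator with multiplication operators satisfies
`κ_i^j ∘ M_{x_p} − M_{x_p} ∘ κ_i^j = δ_p^j M_{x_i} + η₀ δ_i^j M_{x_p}`. -/
theorem kappaGL_relations (m : ℕ) (hm : 1 ≤ m) (η₀ : ℂ) :
    (∀ i j k l : Fin m,
      kappaGL m η₀ i j ∘ₗ kappaGL m η₀ k l - kappaGL m η₀ k l ∘ₗ kappaGL m η₀ i j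
        = (if k = j then (1 : ℂ) else 0) • kappaGL m η₀ i l
          - (if i = l then (1 : ℂ) else 0) • kappaGL m η₀ k j)
    ∧ (∀ i j p : Fin m,
      kappaGL m η₀ i j ∘ₗ LinearMap.mulLeft ℂ (X p)
          - LinearMap.mulLeft ℂ (X p) ∘ₗ kappaGL m η₀ i j
        = (if p = j then (1 : ℂ) else 0) • LinearMap.mulLeft ℂ (X i)
          + (if i = j then η₀ else 0) • LinearMap.mulLeft ℂ (X p)) :=
  kappaGL_relations_general m η₀
end
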